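/- Conditional entropy variance under a Markov condition (classical case): let (A,B,C,D,X) be jointly distributed finite random variables such that conditioned on X, the pair (A,C) is independent of (B,D). Then V(AB|CDX) = V(A|CX) + V(B|DX) + 2·Cov(W₁, W₂), where W₁, W₂ are the random variables taking values H(A|C, X=x) and H(B|D, X=x) respectively, with probability p_x. -/

import Mathlib

open Finset Real

/-- Conditional Shannon entropy (base 2) of the first component given the second. -/
noncomputable def condH {A B : Type*} [Fintype A] [Fintype B] (q : A × B → ℝ) : ℝ :=
  -∑ z : A × B, q z * Real.logb 2 (q z / (∑ a, q (a, z.2)))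

/-- Conditional entropy variance (base 2) of the first component given the second. -/
noncomputable def condV {A B : Type*} [Fintype A] [Fintype B] (q : A × B → ℝ) : ℝ :=
  ∑ z : A × B, q z * (-Real.logb 2 (q z / (∑ a, q (a, z.2))) - condH q)^2

/-!
The joint law of `(AB, CD, X)` is the `p_x`-mixture of the products `p(a,c|x) p(b,d|x)`.
For such a product the conditional surprisal `-log p(ab|cd)` splits as
`-log p(a|c) - log p(b|d)`, a sum of independent terms, so conditional entropies and
entropy variances are additive. For a mixture over `x`, the surprisal at a point with
`p_x > 0` is that of the `x`-th component, so the entropy is the `p_x`-average of the `H_x`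
and the variance obeys the law of total variance `V = Σ p_x (V_x + (H_x - H)²)`.
Expanding the square of `(H(A|C,x) - H(A|CX)) + (H(B|D,x) - H(B|DX))` leaves the
covariance as the cross term.
-/

noncomputable def condInfo {A C : Type*} [Fintype A] (q : A × C → ℝ) (z : A × C) : ℝ :=
  -logb 2 (q z / ∑ a, q (a, z.2))

section Moments

variable {ι κ : Type*} [Fintype ι] [Fintype κ] {w : ι → ℝ}

lemma sum_mul_sub_sq_eq (hw : ∑ i, w i = 1) (f : ι → ℝ) (m : ℝ) :
    ∑ i, w i * (f i - m) ^ 2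
      = ∑ i, w i * (f i - ∑ j, w j * f j) ^ 2 + (∑ j, w j * f j - m) ^ 2 := by
  set μ := ∑ j, w j * f j with hμ
  have h : ∀ i, w i * (f i - m) ^ 2
      = w i * (f i - μ) ^ 2 + 2 * (μ - m) * (w i * f i) + (m ^ 2 - μ ^ 2) * w i := fun i => by
    ring
  simp only [h, sum_add_distrib, ← mul_sum, ← hμ, hw]
  ring

lemma sum_mul_sub_mul_sub (hw : ∑ i, w i = 1) (f g : ι → ℝ) :
    ∑ i, w i * (f i - ∑ j, w j * f j) * (g i - ∑ j, w j * g j)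
      = ∑ i, w i * f i * g i - (∑ i, w i * f i) * (∑ i, w i * g i) := by
  set μ := ∑ j, w j * f j with hμ
  set ν := ∑ j, w j * g j with hν
  have h : ∀ i, w i * (f i - μ) * (g i - ν)
      = w i * f i * g i - ν * (w i * f i) - μ * (w i * g i) + μ * ν * w i := fun i => by
    ring
  simp only [h, sum_add_distrib, sum_sub_distrib, ← mul_sum, ← hμ, ← hν, hw]
  ring

variable {v : κ → ℝ}

lemma sum_sum_mul_mul_add (hw : ∑ i, w i = 1) (hv : ∑ k, v k = 1) (f : ι → ℝ) (g : κ → ℝ) :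
    ∑ i, ∑ k, w i * v k * (f i + g k) = ∑ i, w i * f i + ∑ k, v k * g k := by
  have h : ∀ i k, w i * v k * (f i + g k) = w i * f i * v k + w i * (v k * g k) :=
    fun i k => by ring
  simp only [h, sum_add_distrib, ← mul_sum, ← sum_mul, hw, hv, mul_one, one_mul]

lemma sum_sum_mul_mul_add_sq (hw : ∑ i, w i = 1) (hv : ∑ k, v k = 1) {f : ι → ℝ} {g : κ → ℝ}
    (hf : ∑ i, w i * f i = 0) (hg : ∑ k, v k * g k = 0) :
    ∑ i, ∑ k, w i * v k * (f i + g k) ^ 2 = ∑ i, w i * f i ^ 2 + ∑ k, v k * g k ^ 2 := by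
  have h : ∀ i k, w i * v k * (f i + g k) ^ 2
      = w i * f i ^ 2 * v k + w i * (v k * g k ^ 2) + 2 * (w i * f i) * (v k * g k) :=
    fun i k => by ring
  simp only [h, sum_add_distrib, ← mul_sum, ← sum_mul, hw, hv, hf, hg]
  ring

end Moments

section CondInfo

variable {A B C D X : Type*} [Fintype A] [Fintype B]

lemma condH_eq_sum_mul_condInfo [Fintype C] (q : A × C → ℝ) :
    condH q = ∑ z, q z * condInfo q z := by
  simp only [condH, condInfo, mul_neg, sum_neg_distrib]

lemma condV_eq_sum_mul_condInfo [Fintype C] (q : A × C → ℝ) :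
    condV q = ∑ z, q z * (condInfo q z - condH q) ^ 2 := rfl

lemma sum_mul_condInfo_sub_condH [Fintype C] {q : A × C → ℝ} (hq : ∑ z, q z = 1) :
    ∑ z, q z * (condInfo q z - condH q) = 0 := by
  simp only [mul_sub, sum_sub_distrib, ← sum_mul, hq, one_mul, ← condH_eq_sum_mul_condInfo,
    sub_self]

def mixture (px : X → ℝ) (p : X → A × C → ℝ) : A × (C × X) → ℝ :=
  fun z => px z.2.2 * p z.2.2 (z.1, z.2.1)

lemma condInfo_mixture {px : X → ℝ} {p : X → A × C → ℝ} {a : A} {c : C} {x : X}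
    (hx : px x ≠ 0) : condInfo (mixture px p) (a, (c, x)) = condInfo (p x) (a, c) := by
  simp only [condInfo, mixture, ← mul_sum, mul_div_mul_left _ _ hx]

lemma sum_mixture_mul_condInfo [Fintype C] [Fintype X] (px : X → ℝ) (p : X → A × C → ℝ)
    (φ : ℝ → ℝ) :
    ∑ z, mixture px p z * φ (condInfo (mixture px p) z)
      = ∑ x, px x * ∑ u, p x u * φ (condInfo (p x) u) := by
  have hterm : ∀ a c x, mixture px p (a, (c, x)) * φ (condInfo (mixture px p) (a, (c, x)))
      = px x * (p x (a, c) * φ (condInfo (p x) (a, c))) := fun a c x => by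
    by_cases hx : px x = 0
    · simp [mixture, hx]
    · rw [condInfo_mixture hx, mixture, mul_assoc]
  simp only [mul_sum, Fintype.sum_prod_type, hterm]
  symm
  rw [sum_comm]
  exact sum_congr rfl fun _ _ => sum_comm

lemma condH_mixture [Fintype C] [Fintype X] (px : X → ℝ) (p : X → A × C → ℝ) :
    condH (mixture px p) = ∑ x, px x * condH (p x) := by
  simp only [condH_eq_sum_mul_condInfo]
  exact sum_mixture_mul_condInfo px p id

lemma condV_mixture [Fintype C] [Fintype X] (px : X → ℝ) {p : X → A × C → ℝ}
    (hp : ∀ x, ∑ u, p x u = 1) :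
    condV (mixture px p)
      = ∑ x, px x * (condV (p x) + (condH (p x) - ∑ y, px y * condH (p y)) ^ 2) := by
  rw [condV_eq_sum_mul_condInfo, condH_mixture,
    sum_mixture_mul_condInfo px p (fun t => (t - ∑ y, px y * condH (p y)) ^ 2)]
  refine sum_congr rfl fun x _ => ?_
  rw [sum_mul_sub_sq_eq (hp x), ← condH_eq_sum_mul_condInfo, condV_eq_sum_mul_condInfo]

lemma sum_prod_prod_eq_sum_sum [Fintype C] [Fintype D] (F : A × C → B × D → ℝ) :
    ∑ z : (A × B) × (C × D), F (z.1.1, z.2.1) (z.1.2, z.2.2) = ∑ u, ∑ v, F u v := by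
  rw [← Fintype.sum_prod_type']
  exact Fintype.sum_equiv (Equiv.prodProdProdComm A B C D) _ _ fun _ => rfl

def pairProd (p : A × C → ℝ) (r : B × D → ℝ) : (A × B) × (C × D) → ℝ :=
  fun z => p (z.1.1, z.2.1) * r (z.1.2, z.2.2)

lemma sum_pairProd [Fintype C] [Fintype D] (p : A × C → ℝ) (r : B × D → ℝ) :
    ∑ z, pairProd p r z = (∑ u, p u) * ∑ v, r v := by
  rw [sum_mul_sum]
  exact sum_prod_prod_eq_sum_sum fun u v => p u * r v

lemma sum_fst_pos_of_ne_zero {p : A × C → ℝ} (hp : ∀ u, 0 ≤ p u) {u : A × C} (hu : p u ≠ 0) :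
    0 < ∑ a, p (a, u.2) :=
  (lt_of_le_of_ne (hp u) hu.symm).trans_le
    (single_le_sum (f := fun a => p (a, u.2)) (fun _ _ => hp _) (mem_univ u.1))

lemma condInfo_pairProd {p : A × C → ℝ} {r : B × D → ℝ} (hp : ∀ u, 0 ≤ p u)
    (hr : ∀ v, 0 ≤ r v) {u : A × C} {v : B × D} (hu : p u ≠ 0) (hv : r v ≠ 0) :
    condInfo (pairProd p r) ((u.1, v.1), (u.2, v.2)) = condInfo p u + condInfo r v := by
  have hmarg : ∑ ab : A × B, pairProd p r (ab, (u.2, v.2))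
      = (∑ a, p (a, u.2)) * ∑ b, r (b, v.2) := by
    rw [Fintype.sum_prod_type, sum_mul_sum]
    rfl
  have hpu := (sum_fst_pos_of_ne_zero hp hu).ne'
  have hrv := (sum_fst_pos_of_ne_zero hr hv).ne'
  rw [condInfo, hmarg, pairProd, mul_div_mul_comm,
    logb_mul (div_ne_zero hu hpu) (div_ne_zero hv hrv), neg_add, condInfo, condInfo]

lemma sum_pairProd_mul_condInfo [Fintype C] [Fintype D] {p : A × C → ℝ} {r : B × D → ℝ}
    (hp : ∀ u, 0 ≤ p u) (hr : ∀ v, 0 ≤ r v) (φ : ℝ → ℝ) :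
    ∑ z, pairProd p r z * φ (condInfo (pairProd p r) z)
      = ∑ u, ∑ v, p u * r v * φ (condInfo p u + condInfo r v) := by
  refine (sum_prod_prod_eq_sum_sum
    (fun u v => pairProd p r ((u.1, v.1), (u.2, v.2))
      * φ (condInfo (pairProd p r) ((u.1, v.1), (u.2, v.2))))).trans ?_
  refine sum_congr rfl fun u _ => sum_congr rfl fun v _ => ?_
  by_cases huv : p u = 0 ∨ r v = 0
  · rcases huv with h | h <;> simp [pairProd, h]
  · push Not at huv
    rw [condInfo_pairProd hp hr huv.1 huv.2]
    rfl

lemma condH_pairProd [Fintype C] [Fintype D] {p : A × C → ℝ} {r : B × D → ℝ}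
    (hp0 : ∀ u, 0 ≤ p u) (hr0 : ∀ v, 0 ≤ r v) (hp1 : ∑ u, p u = 1) (hr1 : ∑ v, r v = 1) :
    condH (pairProd p r) = condH p + condH r := by
  rw [condH_eq_sum_mul_condInfo, condH_eq_sum_mul_condInfo, condH_eq_sum_mul_condInfo,
    ← sum_sum_mul_mul_add hp1 hr1]
  exact sum_pairProd_mul_condInfo hp0 hr0 id

lemma condV_pairProd [Fintype C] [Fintype D] {p : A × C → ℝ} {r : B × D → ℝ}
    (hp0 : ∀ u, 0 ≤ p u) (hr0 : ∀ v, 0 ≤ r v) (hp1 : ∑ u, p u = 1) (hr1 : ∑ v, r v = 1) :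
    condV (pairProd p r) = condV p + condV r := by
  rw [condV_eq_sum_mul_condInfo, condH_pairProd hp0 hr0 hp1 hr1,
    sum_pairProd_mul_condInfo hp0 hr0 fun t => (t - (condH p + condH r)) ^ 2]
  simp only [add_sub_add_comm]
  exact sum_sum_mul_mul_add_sq hp1 hr1 (sum_mul_condInfo_sub_condH hp1)
    (sum_mul_condInfo_sub_condH hr1)

end CondInfo

theorem stmt4_general {A B C D X : Type*}
    [Fintype A] [Fintype B] [Fintype C] [Fintype D] [Fintype X]
    (px : X → ℝ) (hpx1 : ∑ x, px x = 1)
    (pAC : X → A × C → ℝ) (pBD : X → B × D → ℝ)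
    (hAC0 : ∀ x z, 0 ≤ pAC x z) (hAC1 : ∀ x, ∑ z, pAC x z = 1)
    (hBD0 : ∀ x z, 0 ≤ pBD x z) (hBD1 : ∀ x, ∑ z, pBD x z = 1) :
    condV (fun z : (A × B) × ((C × D) × X) =>
        px z.2.2 * pAC z.2.2 (z.1.1, z.2.1.1) * pBD z.2.2 (z.1.2, z.2.1.2))
      = condV (fun z : A × (C × X) => px z.2.2 * pAC z.2.2 (z.1, z.2.1))
        + condV (fun z : B × (D × X) => px z.2.2 * pBD z.2.2 (z.1, z.2.1))
        + 2 * ((∑ x, px x * condH (pAC x) * condH (pBD x))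
            - (∑ x, px x * condH (pAC x)) * (∑ x, px x * condH (pBD x))) := by
  have hjoint : (fun z : (A × B) × ((C × D) × X) =>
      px z.2.2 * pAC z.2.2 (z.1.1, z.2.1.1) * pBD z.2.2 (z.1.2, z.2.1.2))
        = mixture px fun x => pairProd (pAC x) (pBD x) :=
    funext fun _ => mul_assoc _ _ _
  have hprob x : ∑ z, pairProd (pAC x) (pBD x) z = 1 := by
    rw [sum_pairProd, hAC1, hBD1, one_mul]
  have hH x : condH (pairProd (pAC x) (pBD x)) = condH (pAC x) + condH (pBD x) :=
    condH_pairProd (hAC0 x) (hBD0 x) (hAC1 x) (hBD1 x)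
  have hV x : condV (pairProd (pAC x) (pBD x)) = condV (pAC x) + condV (pBD x) :=
    condV_pairProd (hAC0 x) (hBD0 x) (hAC1 x) (hBD1 x)
  have hmean : ∑ x, px x * (condH (pAC x) + condH (pBD x))
      = ∑ x, px x * condH (pAC x) + ∑ x, px x * condH (pBD x) := by
    simp only [mul_add, sum_add_distrib]
  rw [hjoint, condV_mixture px hprob]
  simp only [hH, hV, hmean]
  change _ = condV (mixture px pAC) + condV (mixture px pBD) + _
  rw [condV_mixture px hAC1, condV_mixture px hBD1, ← sum_mul_sub_mul_sub hpx1]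
  generalize ∑ x, px x * condH (pAC x) = μ₁
  generalize ∑ x, px x * condH (pBD x) = μ₂
  rw [mul_sum, ← sum_add_distrib, ← sum_add_distrib]
  exact sum_congr rfl fun x _ => by ring

/-- Conditional entropy variance under a Markov condition (classical case):
conditioned on `X`, the pair `(A,C)` is independent of `(B,D)`. -/
theorem stmt4 {A B C D X : Type*}
    [Fintype A] [Fintype B] [Fintype C] [Fintype D] [Fintype X]
    (px : X → ℝ) (hpx0 : ∀ x, 0 ≤ px x) (hpx1 : ∑ x, px x = 1)
    (pAC : X → A × C → ℝ) (pBD : X → B × D → ℝ)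
    (hAC0 : ∀ x z, 0 ≤ pAC x z) (hAC1 : ∀ x, ∑ z, pAC x z = 1)
    (hBD0 : ∀ x z, 0 ≤ pBD x z) (hBD1 : ∀ x, ∑ z, pBD x z = 1) :
    condV (fun z : (A × B) × ((C × D) × X) =>
        px z.2.2 * pAC z.2.2 (z.1.1, z.2.1.1) * pBD z.2.2 (z.1.2, z.2.1.2))
      = condV (fun z : A × (C × X) => px z.2.2 * pAC z.2.2 (z.1, z.2.1))
        + condV (fun z : B × (D × X) => px z.2.2 * pBD z.2.2 (z.1, z.2.1))
        + 2 * ((∑ x, px x * condH (pAC x) * condH (pBD x))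
            - (∑ x, px x * condH (pAC x)) * (∑ x, px x * condH (pBD x))) :=
  stmt4_general px hpx1 pAC pBD hAC0 hAC1 hBD0 hBD1
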